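/- Let m ≥ 1 and p ≥ 1 be integers and let T ⊆ ℕ be a finite set. Let X be the set of all resource profiles, i.e., vectors x = (x_1,…,x_m) with x_i ∈ T for all i, x_1 ≤ x_2 ≤ … ≤ x_m, and x_m − x_1 ≤ p. Then |X| ≤ |T| · C(m−1+p, p), where C(·,·) denotes the binomial coefficient. (Each profile is determined by x_1 ∈ T together with the multiset of offsets x_i − x_1 ∈ {0,…,p} for i ∈ {2,…,m}, and the number of such multisets of size m−1 over p+1 values is C(m−1+p, p).) -/

import Mathlib

set_option maxHeartbeats 1000000


/-- the set of resource profiles — nondecreasing vectors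
`x : Fin m → ℕ` with entries in `T` and `x_m - x_1 ≤ p` — has cardinality at most
`|T| · C(m-1+p, p)`. -/
theorem statement10 (m p : ℕ) (hm : 1 ≤ m) (hp : 1 ≤ p) (T : Finset ℕ) :
    Set.ncard {x : Fin m → ℕ | (∀ i, x i ∈ T) ∧ Monotone x ∧
        x ⟨m - 1, by omega⟩ - x ⟨0, by omega⟩ ≤ p}
      ≤ T.card * Nat.choose (m - 1 + p) p := by
  classical
  set S : Set (Fin m → ℕ) := {x : Fin m → ℕ | (∀ i, x i ∈ T) ∧ Monotone x ∧
        x ⟨m - 1, by omega⟩ - x ⟨0, by omega⟩ ≤ p} with hS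
  -- offsets
  have hidx : ∀ i : Fin (m-1), i.1 + 1 < m := fun i => by omega
  set g : (Fin m → ℕ) → Fin (m-1) → Fin (p+1) := fun x i =>
    ⟨(x ⟨i.1 + 1, hidx i⟩ - x ⟨0, by omega⟩) % (p+1), Nat.mod_lt _ (by omega)⟩ with hg
  -- key: on S, offsets are ≤ p so mod is identity
  have hmod : ∀ x ∈ S, ∀ i : Fin (m-1),
      (g x i).1 = x ⟨i.1 + 1, hidx i⟩ - x ⟨0, by omega⟩ := by
    intro x hx i
    obtain ⟨hT, hmono, hbd⟩ := hx
    have h1 : x ⟨i.1 + 1, hidx i⟩ ≤ x ⟨m - 1, by omega⟩ := hmono (by simp [Fin.le_def])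
    have : x ⟨i.1 + 1, hidx i⟩ - x ⟨0, by omega⟩ ≤ p := by omega
    exact Nat.mod_eq_of_lt (by omega)
  set f : (Fin m → ℕ) → ℕ × Sym (Fin (p+1)) (m-1) := fun x =>
    (x ⟨0, by omega⟩, ⟨(List.ofFn (g x) : Multiset (Fin (p+1))), by simp⟩) with hf
  have hinj : Set.InjOn f S := by
    intro x hx y hy hxy
    have h0 : x ⟨0, by omega⟩ = y ⟨0, by omega⟩ := congrArg Prod.fst hxy
    have hms : (↑(List.ofFn (g x)) : Multiset (Fin (p+1))) = ↑(List.ofFn (g y)) := by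
      have h2 := congrArg Prod.snd hxy
      exact congrArg Subtype.val h2
    have hperm : List.Perm (List.ofFn (g x)) (List.ofFn (g y)) := Multiset.coe_eq_coe.mp hms
    have hsorted : ∀ z ∈ S, (List.ofFn (g z)).SortedLE := by
      intro z hz
      rw [List.sortedLE_ofFn_iff]
      intro i j hij
      have hij' : i.1 ≤ j.1 := hij
      rw [Fin.le_def, hmod z hz i, hmod z hz j]
      exact Nat.sub_le_sub_right (hz.2.1 (Fin.mk_le_mk.mpr (by omega))) _
    have hlist : List.ofFn (g x) = List.ofFn (g y) :=
      hperm.eq_of_sortedLE (hsorted x hx) (hsorted y hy)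
    have hgxy : g x = g y := List.ofFn_injective hlist
    funext j
    rcases Nat.eq_zero_or_pos j.1 with h | h
    · have : j = ⟨0, by omega⟩ := by ext; exact h
      rw [this]; exact h0
    · have hj : j = ⟨(j.1 - 1) + 1, hidx ⟨j.1 - 1, by omega⟩⟩ := by ext; simp; omega
      have hjm : j.1 - 1 < m - 1 := by omega
      have e1 := hmod x hx ⟨j.1 - 1, hjm⟩
      have e2 := hmod y hy ⟨j.1 - 1, hjm⟩
      have e3 : (g x ⟨j.1 - 1, hjm⟩ : ℕ) = (g y ⟨j.1 - 1, hjm⟩ : ℕ) := by rw [hgxy]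
      rw [e1, e2] at e3
      simp only [Fin.val_mk] at e3
      have hx0 : x ⟨0, by omega⟩ ≤ x ⟨(j.1-1)+1, hidx ⟨j.1-1, by omega⟩⟩ :=
        hx.2.1 (Fin.mk_le_mk.mpr (by omega))
      have hy0 : y ⟨0, by omega⟩ ≤ y ⟨(j.1-1)+1, hidx ⟨j.1-1, by omega⟩⟩ :=
        hy.2.1 (Fin.mk_le_mk.mpr (by omega))
      rw [hj]
      omega
  have hmaps : ∀ x ∈ S, f x ∈ (↑(T ×ˢ (Finset.univ : Finset (Sym (Fin (p+1)) (m-1)))) :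
      Set (ℕ × Sym (Fin (p+1)) (m-1))) := by
    intro x hx
    simp only [Finset.coe_product, Finset.coe_univ, Set.mem_prod, Set.mem_univ, and_true,
      Finset.mem_coe]
    exact hx.1 _
  calc S.ncard ≤ Set.ncard (↑(T ×ˢ (Finset.univ : Finset (Sym (Fin (p+1)) (m-1)))) :
      Set (ℕ × Sym (Fin (p+1)) (m-1))) :=
        Set.ncard_le_ncard_of_injOn f hmaps hinj (Finset.finite_toSet _)
    _ = T.card * Fintype.card (Sym (Fin (p+1)) (m-1)) := by
        rw [Set.ncard_coe_finset, Finset.card_product, Finset.card_univ]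
    _ = T.card * Nat.choose (m - 1 + p) p := by
        rw [Sym.card_sym_eq_multichoose, Nat.multichoose_eq, Fintype.card_fin]
        congr 1
        have h1 : p + 1 + (m-1) - 1 = m - 1 + p := by omega
        rw [h1]
        rw [← Nat.choose_symm (by omega : m - 1 ≤ m - 1 + p)]
        congr 1
        omega
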